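/- arXiv:1502.03124 — 4 statements merged into one kernel-verified Lean document; each statement's English description precedes it below -/
import Mathlib

section
/- Let α be real with 0 ≤ α < 1 and let m̃, m be natural numbers with 1 ≤ m̃ ≤ m. If q is the Zipf distribution with parameter α on the library {1,…,m}, then the head probability satisfies Σ_{f=1}^{m̃} q_f ≥ ((m̃+1)^{1−α} − 1)/(m^{1−α} − 1 + (1−α)). -/
/-!
Comparing the decreasing function `x ↦ x^{-α}` with its integral `(b^{1-α} - 1)/(1 - α)` over
`[1, b]` gives `H(α,1,m̃) ≥ ((m̃+1)^{1-α} - 1)/(1 - α)` and, after splitting off the first term,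
`H(α,1,m) ≤ 1 + (m^{1-α} - 1)/(1 - α)`. The head probability is `H(α,1,m̃)/H(α,1,m)`.
-/

open Finset

/-- `H α x y = ∑_{i=x}^{y} i^{-α}` (real power). -/
noncomputable def H (α : ℝ) (x y : ℕ) : ℝ := ∑ i ∈ Finset.Icc x y, (i : ℝ) ^ (-α)

/-- The Zipf distribution with parameter `α` on `{1,…,m}`: `q f = f^{−α}/H(α,1,m)`. -/
noncomputable def zipf (α : ℝ) (m : ℕ) (f : ℕ) : ℝ := (f : ℝ) ^ (-α) / H α 1 m

section ZipfNormalizer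

variable {α : ℝ}

lemma integral_one_rpow_neg (hα : α < 1) (b : ℝ) :
    ∫ x in (1 : ℝ)..b, x ^ (-α) = (b ^ (1 - α) - 1) / (1 - α) := by
  rw [integral_rpow (Or.inl (by linarith)), Real.one_rpow]
  ring_nf

lemma antitoneOn_rpow_neg_Icc (hα : 0 ≤ α) (b : ℝ) :
    AntitoneOn (fun x : ℝ => x ^ (-α)) (Set.Icc 1 b) :=
  (Real.antitoneOn_rpow_Ioi_of_exponent_nonpos (neg_nonpos.2 hα)).mono
    fun _ hx => zero_lt_one.trans_le hx.1

lemma H_eq_sum_Ico (a b : ℕ) : H α a b = ∑ i ∈ Ico a (b + 1), (i : ℝ) ^ (-α) := rfl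

lemma H_nonneg (a b : ℕ) : 0 ≤ H α a b :=
  sum_nonneg fun _ _ => Real.rpow_nonneg (Nat.cast_nonneg _) _

lemma H_one_pos {m : ℕ} (hm : 1 ≤ m) : 0 < H α 1 m :=
  sum_pos (fun _ hi => Real.rpow_pos_of_pos (Nat.cast_pos.2 (mem_Icc.1 hi).1) _)
    ⟨1, mem_Icc.2 ⟨le_rfl, hm⟩⟩

lemma div_le_H_one (hα0 : 0 ≤ α) (hα1 : α < 1) (n : ℕ) :
    (((n : ℝ) + 1) ^ (1 - α) - 1) / (1 - α) ≤ H α 1 n := by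
  have h := AntitoneOn.integral_le_sum_Ico (Nat.le_add_left 1 n)
    (by simpa using antitoneOn_rpow_neg_Icc hα0 (n + 1))
  rw [H_eq_sum_Ico]
  simpa [integral_one_rpow_neg hα1] using h

lemma H_one_le (hα0 : 0 ≤ α) (hα1 : α < 1) {m : ℕ} (hm : 1 ≤ m) :
    H α 1 m ≤ ((m : ℝ) ^ (1 - α) - 1 + (1 - α)) / (1 - α) := by
  have h := AntitoneOn.sum_le_integral_Ico hm
    (by simpa using antitoneOn_rpow_neg_Icc hα0 m)
  have hsplit : H α 1 m = 1 + ∑ i ∈ Ico 1 m, ((i + 1 : ℕ) : ℝ) ^ (-α) := by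
    rw [H_eq_sum_Ico, sum_eq_sum_Ico_succ_bot (by omega),
      sum_Ico_add' (fun i : ℕ => (i : ℝ) ^ (-α))]
    simp
  rw [add_div, div_self (sub_pos.2 hα1).ne', hsplit]
  simp only [Nat.cast_one, integral_one_rpow_neg hα1] at h
  linarith

end ZipfNormalizer

lemma sum_zipf_Icc (α : ℝ) (m a b : ℕ) :
    ∑ f ∈ Icc a b, zipf α m f = H α a b / H α 1 m := by
  simp only [zipf, H, sum_div]

/-- For `0 ≤ α < 1` and `1 ≤ m̃ ≤ m`, the Zipf head satisfies
`∑_{f=1}^{m̃} q_f ≥ ((m̃+1)^{1−α} − 1)/(m^{1−α} − 1 + (1−α))`. -/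
theorem zipf_head_bound (α : ℝ) (hα0 : 0 ≤ α) (hα1 : α < 1)
    (mt m : ℕ) (hmt : 1 ≤ mt) (hm : mt ≤ m) :
    (((mt : ℝ) + 1) ^ (1 - α) - 1) / ((m : ℝ) ^ (1 - α) - 1 + (1 - α)) ≤
      ∑ f ∈ Finset.Icc 1 mt, zipf α m f := by
  have hm1 : 1 ≤ m := hmt.trans hm
  rw [sum_zipf_Icc, ← div_div_div_cancel_right₀ (sub_pos.2 hα1).ne']
  exact div_le_div₀ (H_nonneg 1 mt) (div_le_H_one hα0 hα1 mt) (H_one_pos hm1)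
    (H_one_le hα0 hα1 hm1)
end

section
/- Let ℓ ≥ 1 and r ≥ 1 be natural numbers. Under the uniform product measure on {1,…,ℓ}^r (modeling r i.i.d. uniform draws from {1,…,ℓ}), let Z denote the number of distinct values among the r coordinates. Then E[Z] = ℓ·(1 − (1 − 1/ℓ)^r), and for every real μ with 0 < μ ≤ ℓ·(1 − (1 − 1/ℓ)^r), one has P(Z ≤ ℓ·(1 − (1 − 1/ℓ)^r) − μ) ≤ exp(−μ²/(2ℓ·(1 − (1 − 1/ℓ)^r))). -/
/-!
Let `Y = ℓ - Z` be the number of values that are missed and `q = (1 - 1/ℓ)^r`. Expanding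
`(1 + c)^Y` as a sum over the sets `T` of missed values, and noting that exactly `(ℓ - |T|)^r`
tuples avoid `T`, gives `E[(1 + c)^Y] = ∑_T c^|T| (1 - |T|/ℓ)^r ≤ (1 + c q)^ℓ` by Bernoulli's
inequality `1 - k/ℓ ≤ (1 - 1/ℓ)^k`; the same count over singletons `T` gives `E[Y] = ℓ q`.
So the Laplace transform of `Z` is dominated by that of a binomial variable with `ℓ` trials of
success probability `1 - q`, hence by `exp (-m (1 - e^{-t}))` where `m = E[Z]`. The Chernoff bound
at `t = μ/m` then yields the tail estimate.
-/

open Finset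

theorem sub_le_mul_one_sub_one_div_pow (n k : ℕ) : (n - k : ℝ) ≤ n * (1 - 1 / n) ^ k := by
  rcases n.eq_zero_or_pos with rfl | hn
  · simp
  have hn' : (1 : ℝ) ≤ n := by exact_mod_cast hn
  have hbern := one_add_mul_sub_le_pow (a := 1 - 1 / (n : ℝ))
    (by linarith [div_le_one_of_le₀ hn' n.cast_nonneg]) k
  calc (n - k : ℝ) = n * (1 + k * (1 - 1 / n - 1)) := by field_simp; ring
    _ ≤ n * (1 - 1 / n) ^ k := by gcongr

theorem Real.exp_neg_le_one_sub_add_sq_div_two {x : ℝ} (hx : 0 ≤ x) :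
    Real.exp (-x) ≤ 1 - x + x ^ 2 / 2 := by
  rw [Real.exp_neg, inv_le_iff_one_le_mul₀ (Real.exp_pos x)]
  nlinarith [Real.quadratic_le_exp_of_nonneg hx, sq_nonneg (x ^ 2)]

section
variable {β : Type*} (s : Finset β) (w Z : β → ℝ)

theorem sum_ite_le_le_exp_mul_sum_exp (hw : ∀ x ∈ s, 0 ≤ w x) {t : ℝ} (ht : 0 ≤ t) (a : ℝ) :
    ∑ x ∈ s, (if Z x ≤ a then w x else 0) ≤
      Real.exp (t * a) * ∑ x ∈ s, w x * Real.exp (-(t * Z x)) := by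
  rw [mul_sum]
  refine sum_le_sum fun x hx ↦ ?_
  split_ifs with h
  · calc w x = w x * 1 := (mul_one _).symm
      _ ≤ w x * Real.exp (t * a + -(t * Z x)) := by
          gcongr
          · exact hw x hx
          · exact Real.one_le_exp (by nlinarith)
      _ = _ := by rw [Real.exp_add]; ring
  · exact mul_nonneg (Real.exp_pos _).le (mul_nonneg (hw x hx) (Real.exp_pos _).le)

theorem sum_ite_le_sub_le_exp_of_sum_exp_le (hw : ∀ x ∈ s, 0 ≤ w x) {m μ : ℝ} (hm : 0 < m)
    (hμ : 0 ≤ μ)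
    (hlap : ∀ t, 0 ≤ t → ∑ x ∈ s, w x * Real.exp (-(t * Z x)) ≤
      Real.exp (-(m * (1 - Real.exp (-t))))) :
    ∑ x ∈ s, (if Z x ≤ m - μ then w x else 0) ≤ Real.exp (-μ ^ 2 / (2 * m)) := by
  -- The optimal `t = -log (1 - μ / m)` is not needed: `t = μ / m` already gives the bound,
  -- thanks to `exp (-t) ≤ 1 - t + t ^ 2 / 2`.
  set t := μ / m
  have ht : 0 ≤ t := div_nonneg hμ hm.le
  calc ∑ x ∈ s, (if Z x ≤ m - μ then w x else 0)
      ≤ Real.exp (t * (m - μ)) * ∑ x ∈ s, w x * Real.exp (-(t * Z x)) :=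
        sum_ite_le_le_exp_mul_sum_exp s w Z hw ht _
    _ ≤ Real.exp (t * (m - μ)) * Real.exp (-(m * (1 - Real.exp (-t)))) := by
        gcongr
        exact hlap t ht
    _ = Real.exp (t * (m - μ) - m * (1 - Real.exp (-t))) := by rw [← Real.exp_add]; ring_nf
    _ ≤ Real.exp (-μ ^ 2 / (2 * m)) := by
        have hbound : t * (m - μ) - m * (t - t ^ 2 / 2) = -μ ^ 2 / (2 * m) := by
          simp only [t]; field_simp; ring
        have := Real.exp_neg_le_one_sub_add_sq_div_two ht
        exact Real.exp_le_exp.2 (by nlinarith)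

end

section
variable {ι α : Type*} [Fintype ι] [DecidableEq ι] [Fintype α] [DecidableEq α]

theorem Finset.cast_card_compl {R : Type*} [AddGroupWithOne R] (s : Finset α) :
    (#sᶜ : R) = Fintype.card α - #s := by
  rw [eq_sub_iff_add_eq, ← Nat.cast_add, card_compl_add_card]

theorem card_filter_subset_compl_image (T : Finset α) :
    #{x : ι → α | T ⊆ (univ.image x)ᶜ} = #Tᶜ ^ Fintype.card ι := by
  have : ({x : ι → α | T ⊆ (univ.image x)ᶜ} : Finset _) = Fintype.piFinset fun _ ↦ Tᶜ := by
    ext x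
    simp only [mem_filter, mem_univ, true_and, Fintype.mem_piFinset, subset_iff, mem_compl,
      mem_image, not_exists]
    exact ⟨fun h i hi ↦ h hi i rfl, fun h a ha i hia ↦ h i (hia ▸ ha)⟩
  simp [this]

theorem sum_one_add_pow_card_compl_image {R : Type*} [CommSemiring R] (c : R) :
    ∑ x : ι → α, (1 + c) ^ #(univ.image x)ᶜ =
      ∑ T : Finset α, c ^ #T * (#Tᶜ : R) ^ Fintype.card ι := by
  calc ∑ x : ι → α, (1 + c) ^ #(univ.image x)ᶜ
      = ∑ x : ι → α, ∑ T ∈ (univ.image x)ᶜ.powerset, c ^ #T := by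
        simp only [add_comm (1 : R) c, ← sum_pow_mul_eq_add_pow, one_pow, mul_one]
    _ = ∑ T : Finset α, ∑ _x ∈ {x : ι → α | T ⊆ (univ.image x)ᶜ}, c ^ #T :=
        sum_comm' fun x T ↦ by simp
    _ = _ := by simp [card_filter_subset_compl_image, mul_comm]

theorem sum_pow_card_compl_image_le {b : ℝ} (hb : 1 ≤ b) :
    ∑ x : ι → α, b ^ #(univ.image x)ᶜ ≤
      Fintype.card α ^ Fintype.card ι *
        (1 + (b - 1) * (1 - 1 / Fintype.card α) ^ Fintype.card ι) ^ Fintype.card α := by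
  set n := Fintype.card α
  set r := Fintype.card ι
  set q : ℝ := (1 - 1 / n) ^ r
  have hcompl (T : Finset α) : (#Tᶜ : ℝ) ^ r ≤ n ^ r * q ^ #T := by
    have hT : (#Tᶜ : ℝ) = n - #T := cast_card_compl T
    rw [hT, ← pow_mul, mul_comm r, pow_mul, ← mul_pow]
    gcongr
    · simpa [hT] using (#Tᶜ).cast_nonneg (α := ℝ)
    · exact sub_le_mul_one_sub_one_div_pow n #T
  calc ∑ x : ι → α, b ^ #(univ.image x)ᶜ
      = ∑ T : Finset α, (b - 1) ^ #T * (#Tᶜ : ℝ) ^ r := by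
        rw [← sum_one_add_pow_card_compl_image]; simp
    _ ≤ ∑ T : Finset α, (b - 1) ^ #T * (n ^ r * q ^ #T) := by
        gcongr with T
        exact hcompl T
    _ = n ^ r * ∑ T : Finset α, ((b - 1) * q) ^ #T * 1 ^ (n - #T) := by
        rw [mul_sum]; congr 1; ext T; rw [one_pow, mul_one, mul_pow]; ring
    _ = n ^ r * (1 + (b - 1) * q) ^ n := by
        rw [Fintype.sum_pow_mul_eq_add_pow, add_comm]

theorem sum_card_compl_image :
    ∑ x : ι → α, #(univ.image x)ᶜ = Fintype.card α * (Fintype.card α - 1) ^ Fintype.card ι := by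
  calc ∑ x : ι → α, #(univ.image x)ᶜ
      = ∑ x : ι → α, ∑ a ∈ (univ.image x)ᶜ, 1 := by simp
    _ = ∑ a : α, ∑ _x ∈ {x : ι → α | {a} ⊆ (univ.image x)ᶜ}, 1 :=
        sum_comm' fun x a ↦ by simp
    _ = ∑ _a : α, (Fintype.card α - 1) ^ Fintype.card ι := by
        simp only [sum_const, card_filter_subset_compl_image, card_compl, card_singleton,
          smul_eq_mul, mul_one]
    _ = _ := by simp

theorem sum_one_div_pow_mul_card_image [Nonempty α] :
    ∑ x : ι → α, (1 / Fintype.card α : ℝ) ^ Fintype.card ι * #(univ.image x) =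
      Fintype.card α * (1 - (1 - 1 / Fintype.card α : ℝ) ^ Fintype.card ι) := by
  set n := Fintype.card α with hn_def
  set r := Fintype.card ι with hr_def
  have hn : (n : ℝ) ≠ 0 := by simp [n, Fintype.card_ne_zero]
  have hZ (x : ι → α) : (#(univ.image x) : ℝ) = n - #(univ.image x)ᶜ := by
    rw [cast_card_compl, sub_sub_cancel]
  have hY : ∑ x : ι → α, (#(univ.image x)ᶜ : ℝ) = n * (n - 1) ^ r := by
    rw [← Nat.cast_pred Fintype.card_pos]; exact_mod_cast sum_card_compl_image
  simp only [hZ, ← mul_sum, sum_sub_distrib, hY, sum_const, card_univ, Fintype.card_fun,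
    ← hn_def, ← hr_def, nsmul_eq_mul]
  push_cast
  have hcancel : (1 / n : ℝ) ^ r * n ^ r = 1 := by rw [← mul_pow, one_div_mul_cancel hn, one_pow]
  rw [show (1 - 1 / n : ℝ) = 1 / n * (n - 1) by field_simp, mul_pow]
  linear_combination (n : ℝ) * hcancel

theorem sum_one_div_pow_mul_exp_neg_mul_card_image_le [Nonempty α] {t : ℝ} (ht : 0 ≤ t) :
    ∑ x : ι → α, (1 / Fintype.card α : ℝ) ^ Fintype.card ι * Real.exp (-(t * #(univ.image x))) ≤
      Real.exp (-(Fintype.card α * (1 - (1 - 1 / Fintype.card α : ℝ) ^ Fintype.card ι) *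
        (1 - Real.exp (-t)))) := by
  set n := Fintype.card α
  set r := Fintype.card ι
  set q : ℝ := (1 - 1 / n) ^ r
  have hn : (1 : ℝ) ≤ n := by exact_mod_cast Fintype.card_pos
  have hbase : 0 ≤ 1 - 1 / (n : ℝ) := sub_nonneg.2 (div_le_one_of_le₀ hn n.cast_nonneg)
  have hq0 : 0 ≤ q := pow_nonneg hbase r
  have hq1 : q ≤ 1 := pow_le_one₀ hbase (sub_le_self _ (by positivity))
  have hZ (x : ι → α) :
      Real.exp (-(t * #(univ.image x))) = Real.exp (-t) ^ n * Real.exp t ^ #(univ.image x)ᶜ := by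
    have : (#(univ.image x) : ℝ) = n - #(univ.image x)ᶜ := by rw [cast_card_compl, sub_sub_cancel]
    rw [← Real.exp_nat_mul, ← Real.exp_nat_mul, ← Real.exp_add, this]
    ring_nf
  calc ∑ x : ι → α, (1 / n : ℝ) ^ r * Real.exp (-(t * #(univ.image x)))
      = (1 / n : ℝ) ^ r * Real.exp (-t) ^ n * ∑ x : ι → α, Real.exp t ^ #(univ.image x)ᶜ := by
        simp only [hZ, mul_sum, mul_assoc]
    _ ≤ (1 / n : ℝ) ^ r * Real.exp (-t) ^ n * (n ^ r * (1 + (Real.exp t - 1) * q) ^ n) := by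
        gcongr
        exact sum_pow_card_compl_image_le (Real.one_le_exp ht)
    _ = (1 / n * n : ℝ) ^ r * (Real.exp (-t) * (1 + (Real.exp t - 1) * q)) ^ n := by
        rw [mul_pow, mul_pow]; ring
    _ = (1 - (1 - q) * (1 - Real.exp (-t))) ^ n := by
        rw [one_div_mul_cancel (by positivity), one_pow, one_mul, Real.exp_neg]
        field_simp
        ring
    _ ≤ Real.exp (-((1 - q) * (1 - Real.exp (-t)))) ^ n := by
        gcongr
        · nlinarith [Real.exp_pos (-t), Real.exp_le_one_iff.2 (neg_nonpos.2 ht)]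
        · exact Real.one_sub_le_exp_neg _
    _ = _ := by rw [← Real.exp_nat_mul]; ring_nf

end

theorem uniform_distinct_mean_and_concentration_general
    (ℓ r : ℕ) (hℓ : 1 ≤ ℓ) :
    (∑ x : Fin r → Fin ℓ, (1 / (ℓ : ℝ)) ^ r * ((Finset.univ.image x).card : ℝ)) =
        (ℓ : ℝ) * (1 - (1 - 1 / (ℓ : ℝ)) ^ r) ∧
      ∀ μ : ℝ, 0 < μ → μ ≤ (ℓ : ℝ) * (1 - (1 - 1 / (ℓ : ℝ)) ^ r) →
        (∑ x : Fin r → Fin ℓ,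
            if ((Finset.univ.image x).card : ℝ) ≤
                (ℓ : ℝ) * (1 - (1 - 1 / (ℓ : ℝ)) ^ r) - μ
            then (1 / (ℓ : ℝ)) ^ r else 0) ≤
          Real.exp (-μ ^ 2 / (2 * ((ℓ : ℝ) * (1 - (1 - 1 / (ℓ : ℝ)) ^ r)))) := by
  have : Nonempty (Fin ℓ) := ⟨⟨0, hℓ⟩⟩
  have hmean := sum_one_div_pow_mul_card_image (ι := Fin r) (α := Fin ℓ)
  simp only [Fintype.card_fin] at hmean
  refine ⟨hmean, fun μ hμ hμm ↦ ?_⟩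
  refine sum_ite_le_sub_le_exp_of_sum_exp_le univ (fun _ ↦ (1 / (ℓ : ℝ)) ^ r)
    (fun x ↦ #(univ.image x)) (fun _ _ ↦ by positivity) (hμ.trans_le hμm) hμ.le fun t ht ↦ ?_
  simpa using sum_one_div_pow_mul_exp_neg_mul_card_image_le (ι := Fin r) (α := Fin ℓ) ht

/-- For `r` i.i.d. uniform draws from `{1,…,ℓ}` (explicit uniform product measure,
each tuple having probability `ℓ^{−r}`), the number `Z` of distinct values satisfies
`E[Z] = ℓ(1 − (1 − 1/ℓ)^r)`, and for `0 < μ ≤ E[Z]`,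
`P(Z ≤ E[Z] − μ) ≤ exp(−μ²/(2 E[Z]))`. -/
theorem uniform_distinct_mean_and_concentration
    (ℓ r : ℕ) (hℓ : 1 ≤ ℓ) (hr : 1 ≤ r) :
    (∑ x : Fin r → Fin ℓ, (1 / (ℓ : ℝ)) ^ r * ((Finset.univ.image x).card : ℝ)) =
        (ℓ : ℝ) * (1 - (1 - 1 / (ℓ : ℝ)) ^ r) ∧
      ∀ μ : ℝ, 0 < μ → μ ≤ (ℓ : ℝ) * (1 - (1 - 1 / (ℓ : ℝ)) ^ r) →
        (∑ x : Fin r → Fin ℓ,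
            if ((Finset.univ.image x).card : ℝ) ≤
                (ℓ : ℝ) * (1 - (1 - 1 / (ℓ : ℝ)) ^ r) - μ
            then (1 / (ℓ : ℝ)) ^ r else 0) ≤
          Real.exp (-μ ^ 2 / (2 * ((ℓ : ℝ) * (1 - (1 - 1 / (ℓ : ℝ)) ^ r)))) :=
  uniform_distinct_mean_and_concentration_general ℓ r hℓ
end

section
/- Let n be a natural number, G ∈ [0,1] a real, and M, m̃ reals with 0 < M ≤ m̃. If N is a Binomial(n,G) random variable, then E[ Σ_{ℓ=1}^{N} C(N,ℓ) · (M/m̃)^{ℓ−1} · (1 − M/m̃)^{N−ℓ+1} ] ≤ (m̃/M − 1)·(1 − (1 − M/m̃)^{nG}), where the exponent nG on the right-hand side is a real power. -/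
open Finset

/-!
Writing `p = M/m̃` and `q = 1 - p`, the binomial theorem evaluates the inner sum exactly as
`(q/p)(1 - q^N)`, and `q/p = m̃/M - 1`. Averaging `q^N` over `N ∼ Binomial(n,G)` is evaluating the
probability generating function, which gives `(1 - pG)^n`. Finally Bernoulli's inequality
for exponents in `[0,1]`, `q^G ≤ 1 - pG`, yields `q^(nG) ≤ (1 - pG)^n`.
-/

theorem sum_Icc_choose_mul_pow_pred_mul_pow_succ {K : Type*} [Field K] {p q : K}
    (hp : p ≠ 0) (hpq : p + q = 1) (N : ℕ) :
    ∑ ℓ ∈ Icc 1 N, (N.choose ℓ : K) * p ^ (ℓ - 1) * q ^ (N - ℓ + 1) = q / p * (1 - q ^ N) := by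
  have hbinom : ∑ ℓ ∈ Icc 1 N, (N.choose ℓ : K) * p ^ ℓ * q ^ (N - ℓ) = 1 - q ^ N := by
    have h := add_pow p q N
    rw [hpq, one_pow, range_eq_Ico, sum_eq_sum_Ico_succ_bot N.add_one_pos, zero_add,
      Ico_add_one_right_eq_Icc] at h
    simp only [pow_zero, one_mul, Nat.sub_zero, Nat.choose_zero_right, Nat.cast_one, mul_one] at h
    rw [h, add_sub_cancel_left]
    exact sum_congr rfl fun ℓ _ => by ring
  rw [← hbinom, mul_sum]
  refine sum_congr rfl fun ℓ hℓ => ?_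
  obtain ⟨k, rfl⟩ : ∃ k, ℓ = k + 1 := Nat.exists_eq_add_of_le' (mem_Icc.mp hℓ).1
  rw [Nat.add_sub_cancel, pow_succ q]
  field_simp
  ring

theorem sum_choose_mul_pow_mul_one_sub_pow_mul_pow {R : Type*} [CommRing R] (n : ℕ) (G x : R) :
    ∑ N ∈ range (n + 1), (n.choose N : R) * G ^ N * (1 - G) ^ (n - N) * x ^ N
      = (G * x + (1 - G)) ^ n := by
  rw [add_pow]
  exact sum_congr rfl fun N _ => by ring

theorem sum_choose_mul_pow_mul_one_sub_pow_mul_one_sub_pow {R : Type*} [CommRing R] (n : ℕ)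
    (G x c : R) :
    ∑ N ∈ range (n + 1), (n.choose N : R) * G ^ N * (1 - G) ^ (n - N) * (c * (1 - x ^ N))
      = c * (1 - (G * x + (1 - G)) ^ n) := by
  calc _ = c * (∑ N ∈ range (n + 1), (n.choose N : R) * G ^ N * (1 - G) ^ (n - N) * 1 ^ N
        - ∑ N ∈ range (n + 1), (n.choose N : R) * G ^ N * (1 - G) ^ (n - N) * x ^ N) := by
        rw [← sum_sub_distrib, mul_sum]
        exact sum_congr rfl fun N _ => by ring
    _ = _ := by
      rw [sum_choose_mul_pow_mul_one_sub_pow_mul_pow, sum_choose_mul_pow_mul_one_sub_pow_mul_pow,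
        mul_one, add_sub_cancel, one_pow]

theorem one_sub_rpow_natCast_mul_le_pow {p G : ℝ} (hp : p ≤ 1) (hG0 : 0 ≤ G) (hG1 : G ≤ 1)
    (n : ℕ) : (1 - p) ^ ((n : ℝ) * G) ≤ (1 - p * G) ^ n := by
  have hq : 0 ≤ 1 - p := by linarith
  have hbernoulli : (1 - p) ^ G ≤ 1 - p * G := by
    simpa [sub_eq_add_neg, mul_comm] using
      rpow_one_add_le_one_add_mul_self (s := -p) (by linarith) hG0 hG1
  rw [mul_comm, Real.rpow_mul hq, Real.rpow_natCast]
  exact pow_le_pow_left₀ (Real.rpow_nonneg hq G) hbernoulli n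

/-- Jensen step of Appendix B: for `N ∼ Binomial(n,G)` (the expectation over `N` written
explicitly with binomial weights),
`E[ ∑_{ℓ=1}^{N} C(N,ℓ) (M/m̃)^{ℓ−1} (1 − M/m̃)^{N−ℓ+1} ] ≤ (m̃/M − 1)(1 − (1 − M/m̃)^{nG})`,
the exponent `nG` on the right-hand side being a real power. -/
theorem binomial_expectation_bound
    (n : ℕ) (G : ℝ) (hG0 : 0 ≤ G) (hG1 : G ≤ 1)
    (M mt : ℝ) (hM : 0 < M) (hMmt : M ≤ mt) :
    ∑ N ∈ Finset.range (n + 1),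
        (n.choose N : ℝ) * G ^ N * (1 - G) ^ (n - N) *
          (∑ ℓ ∈ Finset.Icc 1 N,
            (N.choose ℓ : ℝ) * (M / mt) ^ (ℓ - 1) * (1 - M / mt) ^ (N - ℓ + 1)) ≤
      (mt / M - 1) * (1 - (1 - M / mt) ^ ((n : ℝ) * G)) := by
  have hmt : 0 < mt := hM.trans_le hMmt
  have hp : 0 < M / mt := div_pos hM hmt
  have hp1 : M / mt ≤ 1 := (div_le_one hmt).mpr hMmt
  have hratio : (1 - M / mt) / (M / mt) = mt / M - 1 := by field_simp
  have hratio_nonneg : 0 ≤ mt / M - 1 := by rw [sub_nonneg, le_div_iff₀ hM, one_mul]; exact hMmt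
  rw [sum_congr rfl fun N _ => by
      rw [sum_Icc_choose_mul_pow_pred_mul_pow_succ hp.ne' (add_sub_cancel _ _), hratio],
    sum_choose_mul_pow_mul_one_sub_pow_mul_one_sub_pow,
    show G * (1 - M / mt) + (1 - G) = 1 - M / mt * G by ring]
  gcongr
  exact one_sub_rpow_natCast_mul_le_pow hp1 hG0 hG1 n
end

section
/- Let α, n, M, m be reals with 0 < α < 1, n > 0, and 0 < M ≤ m. Define f(x) = x/M + n·(1 − (x/m)^{1−α}) for x > 0, and let x* = min{ max{ (n·(1−α)·M/m)^{1/α} · m, M }, m }. Then for every x with M ≤ x ≤ m, f(x*) ≤ f(x); that is, x* minimizes f over the interval [M, m]. -/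
/-!
`f` is convex, so it lies above its tangent line at the cut-off `x*`:
`f x ≥ f x* + f'(x*) (x - x*)`. The derivative `f'(y) = 1/M - n(1-α)/m · (y/m)^(-α)` is
increasing and vanishes exactly at `y₀ = (n(1-α)M/m)^(1/α) · m`, and `x*` is `y₀` clamped to
`[M, m]`. Hence `f'(x*) (x - x*) ≥ 0` for every `x ∈ [M, m]`: either `x* = y₀` and `f'(x*) = 0`,
or `x* = M ≤ x` with `f'(M) ≥ 0`, or `x* = m ≥ x` with `f'(m) ≤ 0`.
-/

open Real

lemma rpow_le_rpow_add_mul_sub {p s t : ℝ} (hp0 : 0 ≤ p) (hp1 : p ≤ 1) (hs : 0 < s)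
    (ht : 0 ≤ t) : t ^ p ≤ s ^ p + p * s ^ (p - 1) * (t - s) := by
  have h := rpow_one_add_le_one_add_mul_self (s := t / s - 1)
    (by linarith [div_nonneg ht hs.le]) hp0 hp1
  rw [add_sub_cancel, div_rpow ht hs.le, div_le_iff₀ (rpow_pos_of_pos hs p)] at h
  calc t ^ p ≤ (1 + p * (t / s - 1)) * s ^ p := h
    _ = s ^ p + p * s ^ (p - 1) * (t - s) := by
      rw [rpow_sub_one hs.ne']
      field_simp

lemma mul_sub_clamp_nonneg {a b x₀ x d : ℝ} (hab : a ≤ b) (hax : a ≤ x) (hxb : x ≤ b)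
    (hd₀ : x₀ ≤ min (max x₀ a) b → 0 ≤ d) (hd₁ : min (max x₀ a) b ≤ x₀ → d ≤ 0) :
    0 ≤ d * (x - min (max x₀ a) b) := by
  rcases le_total x₀ a with hx₀a | hax₀
  · rw [max_eq_right hx₀a, min_eq_left hab] at hd₀ ⊢
    exact mul_nonneg (hd₀ hx₀a) (sub_nonneg.2 hax)
  rcases le_total x₀ b with hx₀b | hbx₀
  · rw [max_eq_left hax₀, min_eq_left hx₀b] at hd₀ hd₁ ⊢
    rw [le_antisymm (hd₁ le_rfl) (hd₀ le_rfl), zero_mul]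
  · rw [max_eq_left hax₀, min_eq_right hbx₀] at hd₁ ⊢
    exact mul_nonneg_of_nonpos_of_nonpos (hd₁ hbx₀) (sub_nonpos.2 hxb)

noncomputable def rlfuRate (α n M m x : ℝ) : ℝ :=
  x / M + n * (1 - (x / m) ^ (1 - α))

noncomputable def rlfuRateDeriv (α n M m y : ℝ) : ℝ :=
  1 / M - n * (1 - α) / m * (y / m) ^ (-α)

noncomputable def rlfuCutoff (α n M m : ℝ) : ℝ :=
  min (max ((n * (1 - α) * M / m) ^ (1 / α) * m) M) m

section

variable {α n M m : ℝ}

lemma rlfuRate_add_deriv_mul_le (hα0 : 0 ≤ α) (hα1 : α ≤ 1) (hn : 0 ≤ n) (hm : 0 < m)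
    {s x : ℝ} (hs : 0 < s) (hx : 0 ≤ x) :
    rlfuRate α n M m s + rlfuRateDeriv α n M m s * (x - s) ≤ rlfuRate α n M m x := by
  have htangent := rpow_le_rpow_add_mul_sub (p := 1 - α) (by linarith) (by linarith)
    (div_pos hs hm) (div_nonneg hx hm.le)
  rw [show 1 - α - 1 = -α by ring] at htangent
  have hscaled := mul_le_mul_of_nonneg_left htangent hn
  unfold rlfuRate rlfuRateDeriv
  linear_combination hscaled

lemma rlfuRateDeriv_eq (hM : 0 < M) (hm : 0 < m) {y : ℝ} (hy : 0 < y) :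
    rlfuRateDeriv α n M m y = (1 - (n * (1 - α) * M / m) / (y / m) ^ α) / M := by
  unfold rlfuRateDeriv
  rw [rpow_neg (div_pos hy hm).le]
  field_simp

lemma le_rpow_iff_rpow_one_div_mul_le (hα : 0 < α) (hm : 0 < m) {b y : ℝ} (hb : 0 ≤ b)
    (hy : 0 < y) : b ≤ (y / m) ^ α ↔ b ^ (1 / α) * m ≤ y := by
  rw [← le_div_iff₀ hm, one_div, rpow_inv_le_iff_of_pos hb (div_pos hy hm).le hα]

lemma rpow_le_iff_le_rpow_one_div_mul (hα : 0 < α) (hm : 0 < m) {b y : ℝ} (hb : 0 ≤ b)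
    (hy : 0 < y) : (y / m) ^ α ≤ b ↔ y ≤ b ^ (1 / α) * m := by
  rw [← div_le_iff₀ hm, one_div, le_rpow_inv_iff_of_pos (div_pos hy hm).le hb hα]

variable (hα0 : 0 < α) (hα1 : α < 1) (hn : 0 < n) (hM : 0 < M) (hm : 0 < m)
include hα0 hα1 hn hM hm

lemma rlfuRateDeriv_nonneg_iff {y : ℝ} (hy : 0 < y) :
    0 ≤ rlfuRateDeriv α n M m y ↔ (n * (1 - α) * M / m) ^ (1 / α) * m ≤ y := by
  have hb : 0 ≤ n * (1 - α) * M / m := by have := sub_pos.2 hα1; positivity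
  rw [← le_rpow_iff_rpow_one_div_mul_le hα0 hm hb hy, rlfuRateDeriv_eq hM hm hy,
    le_div_iff₀ hM, zero_mul, sub_nonneg, div_le_one (rpow_pos_of_pos (div_pos hy hm) α)]

lemma rlfuRateDeriv_nonpos_iff {y : ℝ} (hy : 0 < y) :
    rlfuRateDeriv α n M m y ≤ 0 ↔ y ≤ (n * (1 - α) * M / m) ^ (1 / α) * m := by
  have hb : 0 ≤ n * (1 - α) * M / m := by have := sub_pos.2 hα1; positivity
  rw [← rpow_le_iff_le_rpow_one_div_mul hα0 hm hb hy, rlfuRateDeriv_eq hM hm hy,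
    div_le_iff₀ hM, zero_mul, sub_nonpos, one_le_div (rpow_pos_of_pos (div_pos hy hm) α)]

end

/-- Optimization of the RLFU cut-off (equation (22) of the paper): for reals
`0 < α < 1`, `n > 0`, `0 < M ≤ m`, the function
`f(x) = x/M + n(1 − (x/m)^{1−α})` on `[M, m]` is minimized at
`x* = min{max{(n(1−α)M/m)^{1/α}·m, M}, m}` (all powers are real powers). -/
theorem rlfu_cutoff_optimal (α n M m : ℝ)
    (hα0 : 0 < α) (hα1 : α < 1) (hn : 0 < n) (hM : 0 < M) (hMm : M ≤ m) :
    ∀ x : ℝ, M ≤ x → x ≤ m →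
      (min (max ((n * (1 - α) * M / m) ^ (1 / α) * m) M) m) / M +
          n * (1 - ((min (max ((n * (1 - α) * M / m) ^ (1 / α) * m) M) m) / m) ^ (1 - α)) ≤
        x / M + n * (1 - (x / m) ^ (1 - α)) := by
  intro x hMx hxm
  have hm : 0 < m := hM.trans_le hMm
  set s := rlfuCutoff α n M m
  have hs : 0 < s := hM.trans_le (le_min (le_max_right _ _) hMm)
  have hsign : 0 ≤ rlfuRateDeriv α n M m s * (x - s) :=
    mul_sub_clamp_nonneg hMm hMx hxm
      (rlfuRateDeriv_nonneg_iff hα0 hα1 hn hM hm hs).2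
      (rlfuRateDeriv_nonpos_iff hα0 hα1 hn hM hm hs).2
  calc rlfuRate α n M m s
      ≤ rlfuRate α n M m s + rlfuRateDeriv α n M m s * (x - s) :=
        le_add_of_nonneg_right hsign
    _ ≤ rlfuRate α n M m x :=
        rlfuRate_add_deriv_mul_le hα0.le hα1.le hn.le hm hs (hM.le.trans hMx)
end
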